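/- arXiv:1411.0859 — 4 statements merged into one kernel-verified Lean document; each statement's English description precedes it below -/
import Mathlib

section
/- Let f : ℝⁿ → ℝ be a continuous semi-algebraic function with S := {x ∈ ℝⁿ : f(x) ≤ 0} nonempty, and suppose there exists a constant c > 0 such that m_f(x) ≥ c for all x with f(x) > 0. Then the linear global error bound c·d(x,S) ≤ [f(x)]_+ holds for all x ∈ ℝⁿ. -/
open Filter Topology Metric Set Pointwise
open scoped RealInnerProductSpace ENNReal

noncomputable section

abbrev En (n : ℕ) := EuclideanSpace ℝ (Fin n)

def toE {n : ℕ} (v : Fin n → ℝ) : En n := WithLp.toLp 2 v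

def IsBasicSA {m : ℕ} (s : Set (Fin m → ℝ)) : Prop :=
  ∃ (k l : ℕ) (g : Fin l → MvPolynomial (Fin m) ℝ),
    s = {x | (∀ i : Fin l, (i : ℕ) < k → MvPolynomial.eval x (g i) = 0) ∧
             (∀ i : Fin l, k ≤ (i : ℕ) → 0 < MvPolynomial.eval x (g i))}

def IsSA {m : ℕ} (s : Set (Fin m → ℝ)) : Prop :=
  ∃ (N : ℕ) (t : Fin N → Set (Fin m → ℝ)), (∀ i, IsBasicSA (t i)) ∧ s = ⋃ i, t i

def IsSASet {n : ℕ} (s : Set (En n)) : Prop := IsSA (toE ⁻¹' s)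

def IsSAFun {n : ℕ} (f : En n → ℝ) : Prop :=
  IsSA {z : Fin (n+1) → ℝ | z (Fin.last n) = f (toE fun j => z j.castSucc)}

def IsSAMap {n p : ℕ} (F : En n → Fin p → ℝ) : Prop :=
  IsSA {z : Fin (n+p) → ℝ | ∀ i : Fin p, z (Fin.natAdd n i) = F (toE fun j => z (Fin.castAdd p j)) i}

def IsSAFunOn (f : ℝ → ℝ) (s : Set ℝ) : Prop :=
  IsSA {z : Fin 2 → ℝ | z 0 ∈ s ∧ z 1 = f (z 0)}

def FrechetSubdiff {n : ℕ} (f : En n → ℝ) (x : En n) : Set (En n) :=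
  {v | ∀ ε > (0:ℝ), ∃ δ > (0:ℝ), ∀ h : En n, h ≠ 0 → ‖h‖ < δ →
        -ε * ‖h‖ ≤ f (x + h) - f x - ⟪v, h⟫}

def LimitingSubdiff {n : ℕ} (f : En n → ℝ) (x : En n) : Set (En n) :=
  {v | ∃ xs vs : ℕ → En n,
        (∀ k, vs k ∈ FrechetSubdiff f (xs k)) ∧
        Tendsto xs atTop (𝓝 x) ∧
        Tendsto (fun k => f (xs k)) atTop (𝓝 (f x)) ∧
        MapClusterPt v atTop vs}

def slopeAt {n : ℕ} (f : En n → ℝ) (x : En n) : ℝ≥0∞ :=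
  ⨅ v ∈ LimitingSubdiff f x, (‖v‖₊ : ℝ≥0∞)

def PalaisSmaleAt {n : ℕ} (f : En n → ℝ) (t : ℝ) : Prop :=
  ∀ xs : ℕ → En n,
    Tendsto (fun k => f (xs k)) atTop (𝓝 t) →
    Tendsto (fun k => slopeAt f (xs k)) atTop (𝓝 0) →
    ∃ (x : En n) (φ : ℕ → ℕ), StrictMono φ ∧ Tendsto (xs ∘ φ) atTop (𝓝 x)

def GoodAtInfinity {n : ℕ} (f : En n → ℝ) : Prop :=
  ∃ c > (0:ℝ), ∃ R > (0:ℝ), ∀ x : En n, 0 < f x → R ≤ ‖x‖ →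
    ENNReal.ofReal c ≤ slopeAt f x

def expVec {n : ℕ} (κ : Fin n →₀ ℕ) : Fin n → ℝ := fun i => (κ i : ℝ)

def NP {n : ℕ} (f : MvPolynomial (Fin n) ℝ) : Set (Fin n → ℝ) :=
  convexHull ℝ ((expVec '' (f.support : Set (Fin n →₀ ℕ))) ∪ {0})

def IsNPAtInfinity {n : ℕ} (Γ : Set (Fin n → ℝ)) : Prop :=
  ∃ A : Finset (Fin n → ℕ),
    Γ = convexHull ℝ (((fun (κ : Fin n → ℕ) (i : Fin n) => (κ i : ℝ)) '' A) ∪ {0})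

def ConvenientSet {n : ℕ} (Γ : Set (Fin n → ℝ)) : Prop :=
  ∀ j : Fin n, ∃ m : ℕ, 0 < m ∧ (fun i => if i = j then (m : ℝ) else 0) ∈ Γ

def Convenient {n : ℕ} (f : MvPolynomial (Fin n) ℝ) : Prop := ConvenientSet (NP f)

def faceOf {n : ℕ} (q : Fin n → ℝ) (Γ : Set (Fin n → ℝ)) : Set (Fin n → ℝ) :=
  {κ | κ ∈ Γ ∧ ∀ κ' ∈ Γ, ∑ j, q j * κ j ≤ ∑ j, q j * κ' j}

def IsFace {n : ℕ} (Δ Γ : Set (Fin n → ℝ)) : Prop := ∃ q : Fin n → ℝ, Δ = faceOf q Γ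

open Classical in
def principalPart {n : ℕ} (f : MvPolynomial (Fin n) ℝ) (Δ : Set (Fin n → ℝ)) :
    MvPolynomial (Fin n) ℝ :=
  ∑ κ ∈ f.support, if expVec κ ∈ Δ then MvPolynomial.monomial κ (MvPolynomial.coeff κ f) else 0

def Mmat {n p : ℕ} (f : Fin p → MvPolynomial (Fin n) ℝ) (q : Fin n → ℝ) (x : Fin n → ℝ) :
    Matrix (Fin p) (Fin n ⊕ Fin p) ℝ :=
  fun i => Sum.elim
    (fun j => x j *
      MvPolynomial.eval x (MvPolynomial.pderiv j (principalPart (f i) (faceOf q (NP (f i))))))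
    (fun i' => if i' = i
      then MvPolynomial.eval x (principalPart (f i) (faceOf q (NP (f i)))) else 0)

def NondegenerateAtInfinity {n p : ℕ} (f : Fin p → MvPolynomial (Fin n) ℝ) : Prop :=
  ∀ q : Fin n → ℝ, (0 : Fin n → ℝ) ∉ faceOf q (∑ i, NP (f i)) →
    ∀ x : Fin n → ℝ, (∀ j, x j ≠ 0) → (Mmat f q x).rank = p

def Hcon (d n p : ℕ) : ℕ := d * (6 * d - 3) ^ (n + p - 1)

def fmax {n p : ℕ} (f : Fin p → MvPolynomial (Fin n) ℝ) (x : En n) : ℝ :=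
  ⨆ i, MvPolynomial.eval (fun j => x j) (f i)

/-!
If `c · d(x, S) > f x`, pick `a < c` and `R < d(x, S)` with `f x < a R`. Then `f > 0` on the
closed ball of radius `R` about `x`, and a penalization argument (an Ekeland-type decrease
principle) finds a point of the open ball carrying a Fréchet subgradient of norm at most `a`.
Fréchet subgradients are limiting subgradients, so the slope there is at most `a < c`: a
contradiction.
-/

theorem frechetSubdiff_subset_limitingSubdiff {n : ℕ} (f : En n → ℝ) (x : En n) :
    FrechetSubdiff f x ⊆ LimitingSubdiff f x := fun v hv =>
  ⟨fun _ => x, fun _ => v, fun _ => hv, tendsto_const_nhds, tendsto_const_nhds,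
    tendsto_const_nhds.mapClusterPt⟩

theorem slopeAt_le_of_mem_frechetSubdiff {n : ℕ} {f : En n → ℝ} {x v : En n}
    (hv : v ∈ FrechetSubdiff f x) : slopeAt f x ≤ ‖v‖₊ :=
  iInf₂_le v (frechetSubdiff_subset_limitingSubdiff f x hv)

theorem mem_frechetSubdiff_of_isLocalMin_add_sq_norm {n : ℕ} {f : En n → ℝ} {z w : En n}
    {μ : ℝ} (hmin : IsLocalMin (fun y => f y + μ * ‖y - w‖ ^ 2) z) :
    (2 * μ) • (w - z) ∈ FrechetSubdiff f z := by
  intro ε hε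
  have hshift : ∀ᶠ h in 𝓝 (0 : En n), f z + μ * ‖z - w‖ ^ 2 ≤ f (z + h) + μ * ‖z + h - w‖ ^ 2 :=
    (continuous_const_add z).tendsto' 0 z (add_zero z) |>.eventually hmin
  have hsmall : ∀ᶠ h in 𝓝 (0 : En n), |μ| * ‖h‖ ≤ ε := by
    refine ((continuous_const.mul continuous_norm).tendsto' (0 : En n) 0 ?_).eventually
      (ge_mem_nhds hε)
    simp
  obtain ⟨δ, hδ, hball⟩ := Metric.eventually_nhds_iff.1 (hshift.and hsmall)
  refine ⟨δ, hδ, fun h _ hh => ?_⟩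
  obtain ⟨hle, hμh⟩ := hball (by simpa using hh)
  have hexpand : ‖z + h - w‖ ^ 2 = ‖z - w‖ ^ 2 + 2 * ⟪z - w, h⟫ + ‖h‖ ^ 2 := by
    rw [add_sub_right_comm, norm_add_sq_real]
  have hinner : ⟪(2 * μ) • (w - z), h⟫ = -(2 * μ * ⟪z - w, h⟫) := by
    rw [real_inner_smul_left, ← neg_sub z w, inner_neg_left]; ring
  have hquad : μ * ‖h‖ ^ 2 ≤ ε * ‖h‖ := by
    calc μ * ‖h‖ ^ 2 ≤ |μ| * ‖h‖ * ‖h‖ := by rw [sq, ← mul_assoc]; gcongr; exact le_abs_self μ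
      _ ≤ ε * ‖h‖ := by gcongr
  rw [hexpand] at hle
  rw [hinner]
  linarith

theorem two_mul_mul_norm_sub_le_of_isLocalMin {E : Type*} [NormedAddCommGroup E]
    [InnerProductSpace ℝ E] {x z w : E} {a μ : ℝ} (ha : 0 ≤ a)
    (hmin : IsLocalMin (fun y => μ * ‖z - y‖ ^ 2 + a * ‖y - x‖) w) :
    2 * μ * ‖z - w‖ ≤ a := by
  rcases (norm_nonneg (z - w)).eq_or_lt with hd | hd
  · rw [← hd, mul_zero]
    exact ha
  set d := ‖z - w‖ with hd_def
  set u := d⁻¹ • (z - w)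
  have hu : ‖u‖ = 1 := by
    rw [norm_smul, norm_inv, Real.norm_of_nonneg hd.le, inv_mul_cancel₀ hd.ne']
  have hpath : Tendsto (fun t : ℝ => w + t • u) (𝓝[>] 0) (𝓝 w) := by
    refine tendsto_nhdsWithin_of_tendsto_nhds ?_
    exact (show Continuous fun t : ℝ => w + t • u by fun_prop).tendsto' 0 w (by simp)
  -- Moving `w` a distance `t` towards `z` changes the objective by at most
  -- `t * (a - 2 μ d + μ t)`, which minimality forces to be nonnegative.
  have hslope : ∀ᶠ t in 𝓝[>] (0 : ℝ), 2 * μ * d ≤ a + μ * t := by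
    filter_upwards [hpath.eventually hmin, self_mem_nhdsWithin] with t hle (ht : 0 < t)
    have hnear : ‖z - (w + t • u)‖ ^ 2 = (d - t) ^ 2 := by
      rw [show z - (w + t • u) = (1 - t / d) • (z - w) by module, norm_smul, mul_pow,
        Real.norm_eq_abs, sq_abs, ← hd_def]
      field_simp
    have hfar : ‖w + t • u - x‖ ≤ ‖w - x‖ + t := by
      calc ‖w + t • u - x‖ = ‖(w - x) + t • u‖ := by rw [add_sub_right_comm]
        _ ≤ ‖w - x‖ + t := by
          grw [norm_add_le, norm_smul, hu, Real.norm_of_nonneg ht.le, mul_one]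
    simp only [hnear] at hle
    have : t * (2 * μ * d) ≤ t * (a + μ * t) := by nlinarith
    exact le_of_mul_le_mul_left this ht
  refine ge_of_tendsto ?_ hslope
  exact tendsto_nhdsWithin_of_tendsto_nhds
    ((show Continuous fun t : ℝ => a + μ * t by fun_prop).tendsto' 0 a (by simp))

/-- Minimize `f z + μ ‖z - w‖² + a ‖w - x‖` over pairs in the ball. For `μ` large the minimizer
`(z, w)` is interior; the `z`-slice yields the subgradient `2 μ (w - z)` of `f` at `z` and the
`w`-slice bounds its norm by `a`. Decoupling the variables avoids a sum rule for the nonsmooth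
term `a ‖· - x‖`. -/
theorem exists_mem_ball_mem_frechetSubdiff_norm_le {n : ℕ} {f : En n → ℝ} {x : En n} {R a : ℝ}
    (hf : ContinuousOn f (closedBall x R)) (hR : 0 < R)
    (hnonneg : ∀ y ∈ closedBall x R, 0 ≤ f y) (hx : f x < a * R) :
    ∃ z ∈ ball x R, ∃ v ∈ FrechetSubdiff f z, ‖v‖ ≤ a := by
  have hxB : x ∈ closedBall x R := mem_closedBall_self hR.le
  have hfx := hnonneg x hxB
  have ha : 0 < a := pos_of_mul_pos_left (hfx.trans_lt hx) hR.le
  have hr : f x / a < R := (div_lt_iff₀' ha).2 hx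
  set ρ := R - f x / a
  have hρ : 0 < ρ := sub_pos.2 hr
  set μ := f x / ρ ^ 2 + 1
  have hμ : 0 < μ := by positivity
  have hcont : ContinuousOn (fun p : En n × En n => f p.1 + μ * ‖p.1 - p.2‖ ^ 2 + a * ‖p.2 - x‖)
      (closedBall x R ×ˢ closedBall x R) :=
    ((hf.comp continuousOn_fst fun _ hp => hp.1).add (by fun_prop)).add (by fun_prop)
  obtain ⟨⟨z, w⟩, ⟨hzB, hwB⟩, hmin⟩ :=
    ((isCompact_closedBall x R).prod (isCompact_closedBall x R)).exists_isMinOn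
      ⟨(x, x), hxB, hxB⟩ hcont
  have hmin' : ∀ z' ∈ closedBall x R, ∀ w' ∈ closedBall x R,
      f z + μ * ‖z - w‖ ^ 2 + a * ‖w - x‖ ≤ f z' + μ * ‖z' - w'‖ ^ 2 + a * ‖w' - x‖ :=
    fun z' hz' w' hw' => isMinOn_iff.1 hmin (z', w') ⟨hz', hw'⟩
  have hpen : μ * ‖z - w‖ ^ 2 + a * ‖w - x‖ ≤ f x := by
    have := hmin' x hxB x hxB
    simp only [sub_self, norm_zero] at this
    linarith [hnonneg z hzB]
  have hwx : ‖w - x‖ ≤ f x / a := by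
    rw [le_div_iff₀' ha]
    linarith [mul_nonneg hμ.le (sq_nonneg ‖z - w‖)]
  have hzw : ‖z - w‖ < ρ := by
    refine lt_of_pow_lt_pow_left₀ 2 hρ.le (lt_of_mul_lt_mul_left ?_ hμ.le)
    have : μ * ρ ^ 2 = f x + ρ ^ 2 := by rw [add_mul, div_mul_cancel₀ _ (by positivity), one_mul]
    linarith [mul_nonneg ha.le (norm_nonneg (w - x)), pow_pos hρ 2]
  have hwBall : w ∈ ball x R := mem_ball_iff_norm.2 (hwx.trans_lt hr)
  have hzBall : z ∈ ball x R := mem_ball_iff_norm.2 <| calc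
    ‖z - x‖ ≤ ‖z - w‖ + ‖w - x‖ := norm_sub_le_norm_sub_add_norm_sub z w x
    _ < R := by linarith
  have hzmin : IsLocalMin (fun y => f y + μ * ‖y - w‖ ^ 2) z := by
    filter_upwards [isOpen_ball.mem_nhds hzBall] with y hy
    linarith [hmin' y (ball_subset_closedBall hy) w hwB]
  have hwmin : IsLocalMin (fun y => μ * ‖z - y‖ ^ 2 + a * ‖y - x‖) w := by
    filter_upwards [isOpen_ball.mem_nhds hwBall] with y hy
    linarith [hmin' z hzB y (ball_subset_closedBall hy)]
  refine ⟨z, hzBall, _, mem_frechetSubdiff_of_isLocalMin_add_sq_norm hzmin, ?_⟩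
  rw [norm_smul, Real.norm_of_nonneg (by positivity), norm_sub_rev]
  exact two_mul_mul_norm_sub_le_of_isLocalMin ha.le hwmin

theorem stmt_6_general (n : ℕ) (f : En n → ℝ) (hcont : Continuous f)
    (S : Set (En n)) (hS : S = {x | f x ≤ 0})
    (c : ℝ) (hc : 0 < c)
    (hslope : ∀ x : En n, 0 < f x → ENNReal.ofReal c ≤ slopeAt f x) :
    ∀ x : En n, c * infDist x S ≤ max (f x) 0 := by
  intro x
  rcases le_or_gt (f x) 0 with hfx | hfx
  · simp [infDist_zero_of_mem (show x ∈ S from hS ▸ hfx)]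
  rw [max_eq_left hfx.le]
  by_contra! hlt
  have hD : 0 < infDist x S := pos_of_mul_pos_right (hfx.trans hlt) hc.le
  obtain ⟨a, hfa, hac⟩ := exists_between ((div_lt_iff₀ hD).2 hlt)
  have ha : 0 < a := (div_pos hfx hD).trans hfa
  obtain ⟨R, hfR, hRD⟩ := exists_between
    (show f x / a < infDist x S by rwa [div_lt_iff₀ ha, ← div_lt_iff₀' hD])
  have hpos : ∀ y ∈ closedBall x R, 0 < f y := fun y hy => by
    by_contra! hfy
    have := infDist_le_dist_of_mem (x := x) (show y ∈ S from hS ▸ hfy)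
    linarith [mem_closedBall'.1 hy]
  obtain ⟨z, hz, v, hv, hva⟩ := exists_mem_ball_mem_frechetSubdiff_norm_le hcont.continuousOn
    ((div_pos hfx ha).trans hfR) (fun y hy => (hpos y hy).le) ((div_lt_iff₀' ha).1 hfR)
  have hcv : ENNReal.ofReal c ≤ ENNReal.ofReal ‖v‖ := by
    rw [ofReal_norm]
    exact (hslope z (hpos z (ball_subset_closedBall hz))).trans (slopeAt_le_of_mem_frechetSubdiff hv)
  linarith [(ENNReal.ofReal_le_ofReal_iff (norm_nonneg v)).1 hcv]

/-- a uniform positive lower bound on the nonsmooth slope on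
`{f > 0}` yields a linear global error bound. -/
theorem stmt_6 (n : ℕ) (f : En n → ℝ) (hcont : Continuous f) (hsa : IsSAFun f)
    (S : Set (En n)) (hS : S = {x | f x ≤ 0}) (hne : S.Nonempty)
    (c : ℝ) (hc : 0 < c)
    (hslope : ∀ x : En n, 0 < f x → ENNReal.ofReal c ≤ slopeAt f x) :
    ∀ x : En n, c * infDist x S ≤ max (f x) 0 :=
  stmt_6_general n f hcont S hS c hc hslope

end
end

section
/- Let f(x) := (1/2)xᵀAx + xᵀb + c be a quadratic function on ℝⁿ, where A ∈ ℝ^{n×n} is a nonzero symmetric matrix, b ∈ ℝⁿ and c ∈ ℝ. Let x̄ ∈ ℝⁿ satisfy ∇f(x̄) = Ax̄ + b = 0. Then for all x ∈ ℝⁿ, (√(2λ(A))/2)·d(x, f⁻¹(f(x̄))) ≤ |f(x) − f(x̄)|^{1/2}, where λ(A) denotes the minimum of |λ_i| over the nonzero eigenvalues λ_i of A. -/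
open Filter Topology Metric Set Pointwise
open scoped RealInnerProductSpace ENNReal

noncomputable section

/-!
After translating `x̄` to the origin, `f - f x̄` is half the quadratic form of `A`; in an
orthonormal eigenbasis it reads `½ ∑ μᵢ cᵢ²`. If this sum `S` is, say, nonnegative, shrinking the
coordinates with `μᵢ > 0` by the factor `t = √(N/P)` (`P`, `N` the positive and negative parts of
`S`) lands on the level set, at squared distance
`(1 - t)² ∑_{μᵢ>0} cᵢ² ≤ (1 - t)² P / λ ≤ (1 - t²) P / λ = S / λ`.
-/

open Finset Matrix Module.End

section
variable {ι : Type*} [Fintype ι]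

theorem exists_sum_mul_sq_eq_zero_of_nonneg (μ c : ι → ℝ) {lam : ℝ}
    (hμ : ∀ i, 0 < μ i → lam ≤ μ i) (hS : 0 ≤ ∑ i, μ i * c i ^ 2) :
    ∃ d : ι → ℝ, ∑ i, μ i * d i ^ 2 = 0 ∧
      lam * ∑ i, (c i - d i) ^ 2 ≤ ∑ i, μ i * c i ^ 2 := by
  set P := ∑ i, if 0 < μ i then μ i * c i ^ 2 else 0
  set R := ∑ i, if 0 < μ i then 0 else μ i * c i ^ 2
  set Q := ∑ i, if 0 < μ i then c i ^ 2 else 0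
  have hPR : ∑ i, μ i * c i ^ 2 = P + R := by
    rw [← sum_add_distrib]
    exact sum_congr rfl fun i _ => by split_ifs <;> ring
  have hP : 0 ≤ P := sum_nonneg fun i _ => by split_ifs <;> positivity
  have hR : R ≤ 0 := sum_nonpos fun i _ => by
    split_ifs with h
    · rfl
    · exact mul_nonpos_of_nonpos_of_nonneg (not_lt.mp h) (sq_nonneg _)
  have hQ : lam * Q ≤ P := by
    rw [mul_sum]
    refine sum_le_sum fun i _ => ?_
    split_ifs with h
    · exact mul_le_mul_of_nonneg_right (hμ i h) (sq_nonneg _)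
    · simp
  set t := √(-R / P)
  have ht0 : 0 ≤ t := Real.sqrt_nonneg _
  have ht1 : t ≤ 1 := Real.sqrt_le_one.mpr (div_le_one_of_le₀ (by linarith) hP)
  have htP : t ^ 2 * P = -R := by
    rw [Real.sq_sqrt (div_nonneg (by linarith) hP)]
    rcases hP.eq_or_lt with h | h
    · rw [← h]; linarith
    · field_simp
  refine ⟨fun i => if 0 < μ i then t * c i else c i, ?_, ?_⟩
  · have : ∑ i, μ i * (if 0 < μ i then t * c i else c i) ^ 2 = t ^ 2 * P + R := by
      rw [mul_sum, ← sum_add_distrib]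
      exact sum_congr rfl fun i _ => by split_ifs <;> ring
    linarith
  · have : ∑ i, (c i - if 0 < μ i then t * c i else c i) ^ 2 = (1 - t) ^ 2 * Q := by
      rw [mul_sum]
      exact sum_congr rfl fun i _ => by split_ifs <;> ring
    rw [this, hPR]
    calc lam * ((1 - t) ^ 2 * Q) = (1 - t) ^ 2 * (lam * Q) := by ring
      _ ≤ (1 - t) ^ 2 * P := mul_le_mul_of_nonneg_left hQ (sq_nonneg _)
      _ ≤ (1 - t ^ 2) * P := mul_le_mul_of_nonneg_right (by nlinarith) hP
      _ = P + R := by rw [sub_mul, htP]; ring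

theorem exists_sum_mul_sq_eq_zero (μ c : ι → ℝ) {lam : ℝ}
    (hμ : ∀ i, μ i ≠ 0 → lam ≤ |μ i|) :
    ∃ d : ι → ℝ, ∑ i, μ i * d i ^ 2 = 0 ∧
      lam * ∑ i, (c i - d i) ^ 2 ≤ |∑ i, μ i * c i ^ 2| := by
  rcases le_or_gt 0 (∑ i, μ i * c i ^ 2) with hS | hS
  · obtain ⟨d, hd, hle⟩ := exists_sum_mul_sq_eq_zero_of_nonneg μ c
      (fun i hi => (hμ i hi.ne').trans_eq (abs_of_pos hi)) hS
    exact ⟨d, hd, hle.trans_eq (abs_of_nonneg hS).symm⟩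
  · obtain ⟨d, hd, hle⟩ := exists_sum_mul_sq_eq_zero_of_nonneg (-μ) c
      (fun i hi => (hμ i (neg_pos.mp hi).ne).trans_eq (abs_of_neg (neg_pos.mp hi)))
      (by simpa only [Pi.neg_apply, neg_mul, sum_neg_distrib] using neg_nonneg.mpr hS.le)
    simp only [Pi.neg_apply, neg_mul, sum_neg_distrib, neg_eq_zero] at hd hle
    exact ⟨d, hd, hle.trans_eq (abs_of_neg hS).symm⟩

theorem Matrix.IsSymm.quadratic_sub_eq_of_critical {A : Matrix ι ι ℝ} (hA : A.IsSymm)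
    {b x₀ : ι → ℝ} (hx₀ : A *ᵥ x₀ + b = 0) (y : ι → ℝ) :
    (1 / 2 * (y ⬝ᵥ A *ᵥ y) + y ⬝ᵥ b) - (1 / 2 * (x₀ ⬝ᵥ A *ᵥ x₀) + x₀ ⬝ᵥ b) =
      1 / 2 * ((y - x₀) ⬝ᵥ A *ᵥ (y - x₀)) := by
  have hcomm : x₀ ⬝ᵥ A *ᵥ y = y ⬝ᵥ A *ᵥ x₀ := by
    rw [dotProduct_mulVec, ← mulVec_transpose, hA.eq, dotProduct_comm]
  rw [eq_neg_of_add_eq_zero_right hx₀]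
  simp only [mulVec_sub, dotProduct_sub, sub_dotProduct, dotProduct_neg]
  linarith

theorem Matrix.inner_toEuclideanLin_self [DecidableEq ι] (A : Matrix ι ι ℝ)
    (w : EuclideanSpace ℝ ι) : ⟪toEuclideanLin A w, w⟫ = w.ofLp ⬝ᵥ A *ᵥ w.ofLp := by
  simp [EuclideanSpace.inner_eq_star_dotProduct, toLpLin_apply]

end

section
variable {E : Type*} [NormedAddCommGroup E] [InnerProductSpace ℝ E] [FiniteDimensional ℝ E]
  {T : E →ₗ[ℝ] E}

theorem LinearMap.IsSymmetric.inner_self_eq_sum (hT : T.IsSymmetric) {n : ℕ}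
    (hn : Module.finrank ℝ E = n) (w : E) :
    ⟪T w, w⟫ = ∑ i, hT.eigenvalues hn i * (hT.eigenvectorBasis hn).repr w i ^ 2 := by
  rw [← (hT.eigenvectorBasis hn).repr.inner_map_map, PiLp.inner_apply]
  refine sum_congr rfl fun i _ => ?_
  rw [hT.eigenvectorBasis_apply_self_apply]
  simp only [Real.ringHom_apply, RCLike.inner_apply, sq]
  ring

theorem LinearMap.IsSymmetric.exists_inner_self_eq_zero (hT : T.IsSymmetric) {lam : ℝ}
    (hlam : ∀ μ : ℝ, μ ≠ 0 → HasEigenvalue T μ → lam ≤ |μ|) (v : E) :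
    ∃ u : E, ⟪T u, u⟫ = 0 ∧ lam * ‖v - u‖ ^ 2 ≤ |⟪T v, v⟫| := by
  let B := hT.eigenvectorBasis rfl
  obtain ⟨d, hd, hle⟩ := exists_sum_mul_sq_eq_zero (hT.eigenvalues rfl) (B.repr v)
    fun i hi => hlam _ hi (hT.hasEigenvalue_eigenvalues rfl i)
  refine ⟨B.repr.symm (WithLp.toLp 2 d), ?_, ?_⟩
  · rw [hT.inner_self_eq_sum rfl]
    simpa only [B, LinearIsometryEquiv.apply_symm_apply] using hd
  · rw [hT.inner_self_eq_sum rfl, ← B.repr.norm_map, map_sub, EuclideanSpace.real_norm_sq_eq]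
    simpa using hle
end

theorem stmt_7_general (n : ℕ) (A : Matrix (Fin n) (Fin n) ℝ) (hsymm : A.IsSymm)
    (b : Fin n → ℝ) (c : ℝ) (f : En n → ℝ)
    (hf : ∀ x : En n, f x =
      (1/2) * dotProduct (fun j => x j) (A.mulVec (fun j => x j)) +
        dotProduct (fun j => x j) b + c)
    (xbar : En n) (hxbar : A.mulVec (fun j => xbar j) + b = 0)
    (lam : ℝ)
    (hlam : lam = sInf {r : ℝ | ∃ μ : ℝ, μ ≠ 0 ∧
      Module.End.HasEigenvalue (Matrix.toLin' A) μ ∧ r = |μ|}) :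
    ∀ x : En n,
      (Real.sqrt (2 * lam) / 2) * infDist x (f ⁻¹' {f xbar}) ≤
        Real.sqrt |f x - f xbar| := by
  intro x
  set T := toEuclideanLin A
  have hT : T.IsSymmetric := isSymmetric_toEuclideanLin_iff.mpr (isHermitian_iff_isSymm.mpr hsymm)
  have hlam_nonneg : 0 ≤ lam := hlam ▸ Real.sInf_nonneg (by rintro _ ⟨μ, -, -, rfl⟩; positivity)
  have hlam_le : ∀ μ : ℝ, μ ≠ 0 → HasEigenvalue T μ → lam ≤ |μ| := fun μ hμ hT_μ => by
    have hA_μ : HasEigenvalue (toLin' A) μ := by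
      rwa [hasEigenvalue_iff_mem_spectrum, spectrum_toLin', ← spectrum_toLpLin 2,
        ← hasEigenvalue_iff_mem_spectrum]
    exact hlam ▸ csInf_le ⟨0, by rintro _ ⟨μ, -, -, rfl⟩; positivity⟩ ⟨μ, hμ, hA_μ, rfl⟩
  have hlevel : ∀ y, f y - f xbar = 1 / 2 * ⟪T (y - xbar), y - xbar⟫ := fun y => by
    rw [inner_toEuclideanLin_self, WithLp.ofLp_sub, hf, hf,
      ← hsymm.quadratic_sub_eq_of_critical hxbar]
    ring
  obtain ⟨u, hu_zero, hu_le⟩ := hT.exists_inner_self_eq_zero hlam_le (x - xbar)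
  have hmem : xbar + u ∈ f ⁻¹' {f xbar} := by
    have := hlevel (xbar + u)
    rw [add_sub_cancel_left, hu_zero] at this
    simpa [sub_eq_zero] using this
  have hdist : infDist x (f ⁻¹' {f xbar}) ≤ ‖x - xbar - u‖ :=
    (infDist_le_dist_of_mem hmem).trans_eq (by rw [dist_eq_norm, sub_sub])
  have hdist_sq : lam * infDist x (f ⁻¹' {f xbar}) ^ 2 ≤ |⟪T (x - xbar), x - xbar⟫| :=
    (mul_le_mul_of_nonneg_left (pow_le_pow_left₀ infDist_nonneg hdist 2) hlam_nonneg).trans hu_le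
  rw [hlevel x, Real.le_sqrt (mul_nonneg (by positivity) infDist_nonneg) (abs_nonneg _), mul_pow,
    div_pow, Real.sq_sqrt (by positivity), abs_mul, abs_of_pos one_half_pos]
  linarith

/-- Hölder-type global error bound for the level set of a quadratic
function through a critical point. -/
theorem stmt_7 (n : ℕ) (A : Matrix (Fin n) (Fin n) ℝ) (hsymm : A.IsSymm) (hA : A ≠ 0)
    (b : Fin n → ℝ) (c : ℝ) (f : En n → ℝ)
    (hf : ∀ x : En n, f x =
      (1/2) * dotProduct (fun j => x j) (A.mulVec (fun j => x j)) +
        dotProduct (fun j => x j) b + c)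
    (xbar : En n) (hxbar : A.mulVec (fun j => xbar j) + b = 0)
    (lam : ℝ)
    (hlam : lam = sInf {r : ℝ | ∃ μ : ℝ, μ ≠ 0 ∧
      Module.End.HasEigenvalue (Matrix.toLin' A) μ ∧ r = |μ|}) :
    ∀ x : En n,
      (Real.sqrt (2 * lam) / 2) * infDist x (f ⁻¹' {f xbar}) ≤
        Real.sqrt |f x - f xbar| :=
  stmt_7_general n A hsymm b c f hf xbar hxbar lam hlam

end
end

section
/- Let f(x) := (1/2)xᵀAx + xᵀb + c be a quadratic function on ℝⁿ, where A ∈ ℝ^{n×n} is a nonzero symmetric matrix, b ∈ ℝⁿ and c ∈ ℝ, and let x̄ ∈ ℝⁿ satisfy Ax̄ + b = 0. Then the gradient inequality √(2λ(A))·|f(x) − f(x̄)|^{1/2} ≤ ‖∇f(x)‖ = ‖Ax + b‖ holds for all x ∈ ℝⁿ, where λ(A) denotes the minimum of |λ_i| over the nonzero eigenvalues λ_i of A. -/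
/-!
Write `y = x - x̄` and `T` for `A` acting on Euclidean space. Since `x̄` is critical,
`∇f(x) = T y` and `f x - f x̄ = ½ ⟪y, T y⟫`. In an orthonormal eigenbasis of `T` with coordinates
`cᵢ` and eigenvalues `μᵢ`, `⟪y, T y⟫ = ∑ μᵢ cᵢ²` and `‖T y‖² = ∑ μᵢ² cᵢ²`; as `λ |μᵢ| ≤ μᵢ²` for
every `i` (trivially when `μᵢ = 0`), this gives `λ |⟪y, T y⟫| ≤ ‖T y‖²`.
-/

open Filter Topology Metric Set Pointwise
open scoped RealInnerProductSpace ENNReal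

noncomputable section

open Module Module.End Matrix

namespace LinearMap.IsSymmetric

variable {E : Type*} [NormedAddCommGroup E] [InnerProductSpace ℝ E] [FiniteDimensional ℝ E]
  {T : E →ₗ[ℝ] E} {n : ℕ}

lemma inner_map_self_eq_sum_eigenvalues (hT : T.IsSymmetric) (hn : finrank ℝ E = n) (y : E) :
    ⟪y, T y⟫ = ∑ i, hT.eigenvalues hn i * (hT.eigenvectorBasis hn).repr y i ^ 2 := by
  rw [← (hT.eigenvectorBasis hn).repr.inner_map_map, PiLp.inner_apply]
  refine Finset.sum_congr rfl fun i _ => ?_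
  rw [eigenvectorBasis_apply_self_apply, RCLike.inner_apply, conj_trivial, RCLike.ofReal_real_eq_id,
    id_eq]
  ring

lemma norm_map_sq_eq_sum_eigenvalues (hT : T.IsSymmetric) (hn : finrank ℝ E = n) (y : E) :
    ‖T y‖ ^ 2 = ∑ i, (hT.eigenvalues hn i * (hT.eigenvectorBasis hn).repr y i) ^ 2 := by
  rw [← (hT.eigenvectorBasis hn).repr.norm_map, EuclideanSpace.norm_sq_eq]
  simp [eigenvectorBasis_apply_self_apply, ← abs_mul, sq_abs]

theorem mul_abs_inner_map_self_le_norm_map_sq (hT : T.IsSymmetric) {lam : ℝ}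
    (hlam : ∀ μ, μ ≠ 0 → HasEigenvalue T μ → lam ≤ |μ|) (y : E) :
    lam * |⟪y, T y⟫| ≤ ‖T y‖ ^ 2 := by
  rcases lt_or_ge lam 0 with hneg | hnonneg
  · exact (mul_nonpos_of_nonpos_of_nonneg hneg.le (abs_nonneg _)).trans (sq_nonneg _)
  set μ := hT.eigenvalues rfl
  set c := (hT.eigenvectorBasis rfl).repr y
  have hterm : ∀ i, lam * |μ i| ≤ μ i ^ 2 := fun i => by
    rcases eq_or_ne (μ i) 0 with h | h
    · simp [h]
    · rw [← sq_abs, sq]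
      exact mul_le_mul_of_nonneg_right (hlam _ h (hT.hasEigenvalue_eigenvalues rfl i)) (abs_nonneg _)
  calc lam * |⟪y, T y⟫| = lam * |∑ i, μ i * c i ^ 2| := by
        rw [hT.inner_map_self_eq_sum_eigenvalues rfl]
    _ ≤ lam * ∑ i, |μ i| * c i ^ 2 := by
        gcongr
        refine (Finset.abs_sum_le_sum_abs _ _).trans_eq (Finset.sum_congr rfl fun i _ => ?_)
        rw [abs_mul, abs_sq]
    _ = ∑ i, lam * |μ i| * c i ^ 2 := by rw [Finset.mul_sum]; simp only [mul_assoc]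
    _ ≤ ∑ i, μ i ^ 2 * c i ^ 2 := by gcongr with i; exact hterm i
    _ = ‖T y‖ ^ 2 := by rw [hT.norm_map_sq_eq_sum_eigenvalues rfl]; simp only [mul_pow, μ, c]

end LinearMap.IsSymmetric

namespace Matrix

variable {ι : Type*} [Fintype ι]

lemma hasEigenvalue_toEuclideanLin_iff {𝕜 : Type*} [RCLike 𝕜] [DecidableEq ι]
    {A : Matrix ι ι 𝕜} {μ : 𝕜} :
    HasEigenvalue (toEuclideanLin A) μ ↔ HasEigenvalue (toLin' A) μ := by
  rw [hasEigenvalue_iff_mem_spectrum, hasEigenvalue_iff_mem_spectrum, spectrum_toLpLin,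
    spectrum_toLin']

lemma IsSymm.dotProduct_mulVec_comm {R : Type*} [CommRing R] {A : Matrix ι ι R} (hA : A.IsSymm) (v w : ι → R) :
    v ⬝ᵥ A *ᵥ w = w ⬝ᵥ A *ᵥ v := by
  simpa only [hA.eq] using dotProduct_transpose_mulVec A v w

lemma IsSymm.quadratic_sub_quadratic_of_critical {K : Type*} [Field K] [NeZero (2 : K)]
    {A : Matrix ι ι K} (hA : A.IsSymm) {b xbar : ι → K} (hcrit : A *ᵥ xbar + b = 0) (c : K)
    (x : ι → K) :
    (1 / 2 * x ⬝ᵥ A *ᵥ x + x ⬝ᵥ b + c) - (1 / 2 * xbar ⬝ᵥ A *ᵥ xbar + xbar ⬝ᵥ b + c) =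
      1 / 2 * (x - xbar) ⬝ᵥ A *ᵥ (x - xbar) := by
  rw [← neg_eq_of_add_eq_zero_right hcrit]
  simp only [mulVec_sub, dotProduct_sub, sub_dotProduct, dotProduct_neg,
    hA.dotProduct_mulVec_comm xbar x]
  field_simp
  ring

end Matrix

theorem stmt_8_general (n : ℕ) (A : Matrix (Fin n) (Fin n) ℝ) (hsymm : A.IsSymm)
    (b : Fin n → ℝ) (c : ℝ) (f : En n → ℝ)
    (hf : ∀ x : En n, f x =
      (1/2) * dotProduct (fun j => x j) (A.mulVec (fun j => x j)) +
        dotProduct (fun j => x j) b + c)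
    (xbar : En n) (hxbar : A.mulVec (fun j => xbar j) + b = 0)
    (lam : ℝ)
    (hlam : lam = sInf {r : ℝ | ∃ μ : ℝ, μ ≠ 0 ∧
      Module.End.HasEigenvalue (Matrix.toLin' A) μ ∧ r = |μ|}) :
    ∀ x : En n,
      Real.sqrt (2 * lam) * Real.sqrt |f x - f xbar| ≤
        ‖toE (A.mulVec (fun j => x j) + b)‖ := by
  intro x
  replace hf (x : En n) : f x = 1 / 2 * x.ofLp ⬝ᵥ A *ᵥ x.ofLp + x.ofLp ⬝ᵥ b + c := hf x
  replace hxbar : A *ᵥ xbar.ofLp + b = 0 := hxbar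
  set T := toEuclideanLin A
  have hT : T.IsSymmetric := isSymmetric_toEuclideanLin_iff.mpr (isHermitian_iff_isSymm.mpr hsymm)
  have habs_nonneg : ∀ r ∈ {r : ℝ | ∃ μ : ℝ, μ ≠ 0 ∧ HasEigenvalue (toLin' A) μ ∧ r = |μ|},
      0 ≤ r := by
    rintro r ⟨μ, -, -, rfl⟩
    exact abs_nonneg μ
  have hlam_le (μ : ℝ) (hμ : μ ≠ 0) (hμT : HasEigenvalue T μ) : lam ≤ |μ| :=
    hlam ▸ csInf_le ⟨0, habs_nonneg⟩ ⟨μ, hμ, hasEigenvalue_toEuclideanLin_iff.mp hμT, rfl⟩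
  have hlam0 : 0 ≤ lam := hlam ▸ Real.sInf_nonneg habs_nonneg
  set y := x - xbar
  have hgrad : toE (A *ᵥ x + b) = T y := by
    rw [← neg_eq_of_add_eq_zero_right hxbar]
    ext j
    simp [toE, T, y, sub_eq_add_neg]
  have hval : f x - f xbar = 1 / 2 * ⟪y, T y⟫ := by
    rw [hf, hf, hsymm.quadratic_sub_quadratic_of_critical hxbar]
    simp [T, y, EuclideanSpace.inner_eq_star_dotProduct, dotProduct_comm, mulVec_sub]
  calc √(2 * lam) * √|f x - f xbar| = √(lam * |⟪y, T y⟫|) := by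
        rw [← Real.sqrt_mul (by positivity), hval, abs_mul, abs_of_pos one_half_pos]
        ring_nf
    _ ≤ √(‖T y‖ ^ 2) := Real.sqrt_le_sqrt (hT.mul_abs_inner_map_self_le_norm_map_sq hlam_le y)
    _ = ‖toE (A *ᵥ x + b)‖ := by rw [Real.sqrt_sq (norm_nonneg _), hgrad]

/-- gradient inequality for a quadratic function through a critical
point. -/
theorem stmt_8 (n : ℕ) (A : Matrix (Fin n) (Fin n) ℝ) (hsymm : A.IsSymm) (hA : A ≠ 0)
    (b : Fin n → ℝ) (c : ℝ) (f : En n → ℝ)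
    (hf : ∀ x : En n, f x =
      (1/2) * dotProduct (fun j => x j) (A.mulVec (fun j => x j)) +
        dotProduct (fun j => x j) b + c)
    (xbar : En n) (hxbar : A.mulVec (fun j => xbar j) + b = 0)
    (lam : ℝ)
    (hlam : lam = sInf {r : ℝ | ∃ μ : ℝ, μ ≠ 0 ∧
      Module.End.HasEigenvalue (Matrix.toLin' A) μ ∧ r = |μ|}) :
    ∀ x : En n,
      Real.sqrt (2 * lam) * Real.sqrt |f x - f xbar| ≤
        ‖toE (A.mulVec (fun j => x j) + b)‖ :=
  stmt_8_general n A hsymm b c f hf xbar hxbar lam hlam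

end
end

section
/- Let a_1, ..., a_n be integers and define the polynomial f : ℝⁿ → ℝ by f(x) := (Σ_{j=1}^n a_j x_j)² + Σ_{j=1}^n (x_j² − 1)². Assume inf_{x∈ℝⁿ} f(x) = 0, and let S := {x ∈ ℝⁿ : f(x) = 0}, which is then nonempty. Then there exists a constant c > 0 such that c·d(x,S) ≤ [f(x)]^{1/(8·45ⁿ)} + f(x) for all x ∈ ℝⁿ. -/
open Filter Topology Metric Set Pointwise
open scoped RealInnerProductSpace ENNReal

noncomputable section

/-!
Round every coordinate of `x` to `±1`, getting a sign vector `σ`. Since `|t - sign t| ≤ |t² - 1|`,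
`‖x - σ‖ ≤ √f(x)`. The value `a · σ` is an integer within `(1 + ∑ |aⱼ|) √f(x)` of `a · x`,
hence `0` once `f(x)` is small, and then `σ ∈ S`. So `d(x, S) ≤ √f(x) ≤ f(x)^θ` near `S`
(any `θ ≤ 1/2` works, in particular `1/(8·45ⁿ)`), while globally `d(x, S) ≤ 2√n + √f(x)`
grows at most linearly in `f(x)`.
-/

def partitionObjective {n : ℕ} (a : Fin n → ℤ) (x : En n) : ℝ :=
  (∑ j, (a j : ℝ) * x j) ^ 2 + ∑ j, (x j ^ 2 - 1) ^ 2

def roundSign (t : ℝ) : ℤ := if 0 ≤ t then 1 else -1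

def signVec {n : ℕ} (x : En n) : En n := toE fun j => (roundSign (x j) : ℝ)

lemma roundSign_sq (t : ℝ) : (roundSign t : ℝ) ^ 2 = 1 := by
  unfold roundSign; split_ifs <;> norm_num

lemma abs_sub_roundSign_le (t : ℝ) : |t - roundSign t| ≤ |t ^ 2 - 1| := by
  unfold roundSign
  split_ifs with ht
  · rw [show t ^ 2 - 1 = (t - 1) * (t + 1) by ring, abs_mul, Int.cast_one]
    exact le_mul_of_one_le_right (abs_nonneg _) (by rw [abs_of_nonneg] <;> linarith)
  · rw [show t ^ 2 - 1 = (t + 1) * (t - 1) by ring, abs_mul, Int.cast_neg, Int.cast_one,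
      sub_neg_eq_add]
    exact le_mul_of_one_le_right (abs_nonneg _) (by rw [abs_of_neg] <;> linarith)

lemma norm_signVec {n : ℕ} (x : En n) : ‖signVec x‖ = √n := by
  simp [EuclideanSpace.norm_eq, signVec, toE, roundSign_sq]

lemma dist_signVec_sq_le {n : ℕ} (x : En n) :
    dist x (signVec x) ^ 2 ≤ ∑ j, (x j ^ 2 - 1) ^ 2 := by
  rw [EuclideanSpace.dist_eq, Real.sq_sqrt (by positivity)]
  refine Finset.sum_le_sum fun j _ => ?_
  rw [Real.dist_eq, sq_le_sq, abs_abs]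
  exact abs_sub_roundSign_le (x j)

section partitionObjective

variable {n : ℕ} (a : Fin n → ℤ) (x : En n)

lemma partitionObjective_nonneg : 0 ≤ partitionObjective a x := by
  unfold partitionObjective; positivity

lemma sq_sum_le_partitionObjective : (∑ j, (a j : ℝ) * x j) ^ 2 ≤ partitionObjective a x :=
  le_add_of_nonneg_right (by positivity)

lemma sum_sq_sub_one_le_partitionObjective :
    ∑ j, (x j ^ 2 - 1) ^ 2 ≤ partitionObjective a x :=
  le_add_of_nonneg_left (sq_nonneg _)

lemma dist_signVec_le : dist x (signVec x) ≤ √(partitionObjective a x) :=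
  (Real.le_sqrt dist_nonneg (partitionObjective_nonneg a x)).2 <|
    (dist_signVec_sq_le x).trans (sum_sq_sub_one_le_partitionObjective a x)

lemma norm_le_sqrt_add_sqrt_partitionObjective : ‖x‖ ≤ √n + √(partitionObjective a x) := by
  calc ‖x‖ ≤ ‖signVec x‖ + ‖signVec x - x‖ := norm_le_norm_add_norm_sub _ _
    _ ≤ √n + √(partitionObjective a x) := by
      rw [norm_signVec, ← dist_eq_norm, dist_comm]
      gcongr
      exact dist_signVec_le a x

lemma abs_sum_mul_roundSign_le :
    |∑ j, (a j : ℝ) * roundSign (x j)| ≤ (1 + ∑ j, |(a j : ℝ)|) * √(partitionObjective a x) := by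
  set r := √(partitionObjective a x)
  have hcoord (j : Fin n) : |roundSign (x j) - x j| ≤ r := by
    rw [abs_sub_comm]
    refine (abs_sub_roundSign_le (x j)).trans (Real.abs_le_sqrt ?_)
    exact (Finset.single_le_sum (f := fun i => (x i ^ 2 - 1) ^ 2) (fun _ _ => sq_nonneg _)
      (Finset.mem_univ j)).trans (sum_sq_sub_one_le_partitionObjective a x)
  have hsplit : ∑ j, (a j : ℝ) * roundSign (x j) =
      ∑ j, (a j : ℝ) * x j + ∑ j, (a j : ℝ) * (roundSign (x j) - x j) := by
    rw [← Finset.sum_add_distrib]; congr 1; ext j; ring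
  calc |∑ j, (a j : ℝ) * roundSign (x j)|
      ≤ |∑ j, (a j : ℝ) * x j| + ∑ j, |(a j : ℝ) * (roundSign (x j) - x j)| := by
        rw [hsplit]
        exact (abs_add_le _ _).trans (by gcongr; exact Finset.abs_sum_le_sum_abs _ _)
    _ ≤ r + ∑ j, |(a j : ℝ)| * r := by
        gcongr with j
        · exact Real.abs_le_sqrt (sq_sum_le_partitionObjective a x)
        · rw [abs_mul]; gcongr; exact hcoord j
    _ = (1 + ∑ j, |(a j : ℝ)|) * r := by rw [← Finset.sum_mul]; ring

lemma partitionObjective_signVec_eq_zero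
    (hx : (1 + ∑ j, |(a j : ℝ)|) ^ 2 * partitionObjective a x < 1) :
    partitionObjective a (signVec x) = 0 := by
  set m : ℤ := ∑ j, a j * roundSign (x j)
  have hm : (m : ℝ) = ∑ j, (a j : ℝ) * roundSign (x j) := by push_cast [m]; rfl
  have hlt : |(m : ℝ)| < 1 := by
    refine hm ▸ (abs_sum_mul_roundSign_le a x).trans_lt ?_
    refine (abs_lt_of_sq_lt_sq' ?_ zero_le_one).2
    rwa [mul_pow, Real.sq_sqrt (partitionObjective_nonneg a x), one_pow]
  have hm0 : m = 0 := Int.abs_lt_one_iff.1 (by exact_mod_cast hlt)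
  have hsum : ∑ j, (a j : ℝ) * (signVec x) j = m := hm.symm
  rw [partitionObjective, hsum, hm0]
  simp [signVec, toE, roundSign_sq]

lemma dist_le_of_partitionObjective_eq_zero {y : En n} (hy : partitionObjective a y = 0) :
    dist x y ≤ 2 * √n + 1 + partitionObjective a x := by
  have hsqrt : √(partitionObjective a x) ≤ 1 + partitionObjective a x := by
    rw [Real.sqrt_le_left (by linarith [partitionObjective_nonneg a x])]
    nlinarith [partitionObjective_nonneg a x]
  have hy_norm := norm_le_sqrt_add_sqrt_partitionObjective a y
  rw [hy, Real.sqrt_zero, add_zero] at hy_norm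
  calc dist x y ≤ ‖x‖ + ‖y‖ := dist_le_norm_add_norm _ _
    _ ≤ 2 * √n + 1 + partitionObjective a x := by
      linarith [norm_le_sqrt_add_sqrt_partitionObjective a x]

end partitionObjective

lemma exists_mul_le_rpow_add {X : Type*} (g D : X → ℝ) (hg : ∀ x, 0 ≤ g x)
    (hD : ∀ x, 0 ≤ D x) {δ K θ : ℝ} (hδ : 0 < δ) (hδ1 : δ ≤ 1) (hK : 0 ≤ K) (hθ : θ ≤ 1 / 2)
    (hlocal : ∀ x, g x < δ → D x ≤ √(g x)) (hglobal : ∀ x, D x ≤ K + g x) :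
    ∃ c > 0, ∀ x, c * D x ≤ g x ^ θ + g x := by
  have hKδ : 0 < K + δ := by positivity
  refine ⟨δ / (K + δ), by positivity, fun x => ?_⟩
  have hc1 : δ / (K + δ) ≤ 1 := (div_le_one hKδ).2 (by linarith)
  have hgθ : 0 ≤ g x ^ θ := Real.rpow_nonneg (hg x) θ
  rcases lt_or_ge (g x) δ with hsmall | hlarge
  · have hsqrt : √(g x) ≤ g x ^ θ := by
      rcases (hg x).eq_or_lt with h0 | hpos
      · rw [← h0, Real.sqrt_zero]; exact Real.rpow_nonneg le_rfl θ
      · rw [Real.sqrt_eq_rpow]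
        exact Real.rpow_le_rpow_of_exponent_ge hpos (by linarith) hθ
    calc δ / (K + δ) * D x ≤ D x := mul_le_of_le_one_left (hD x) hc1
      _ ≤ g x ^ θ + g x := by linarith [hlocal x hsmall, hg x]
  · calc δ / (K + δ) * D x ≤ δ / (K + δ) * (K + g x) := by gcongr; exact hglobal x
      _ ≤ g x := by
        rw [div_mul_eq_mul_div, div_le_iff₀ hKδ]; nlinarith
      _ ≤ g x ^ θ + g x := le_add_of_nonneg_left hgθ

/-- Hölder-type global error bound for the polynomial arising from
the partition problem. -/
theorem stmt_17 (n : ℕ) (a : Fin n → ℤ) (f : En n → ℝ)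
    (hf : ∀ x : En n,
      f x = (∑ j, (a j : ℝ) * x j) ^ 2 + ∑ j, (x j ^ 2 - 1) ^ 2)
    (hinf : IsGLB (Set.range f) 0)
    (S : Set (En n)) (hS : S = {x | f x = 0}) :
    S.Nonempty ∧
    ∃ c > (0:ℝ), ∀ x : En n,
      c * infDist x S ≤ f x ^ ((1:ℝ) / (8 * 45 ^ n)) + f x := by
  obtain rfl : f = partitionObjective a := funext hf
  subst hS
  set A := 1 + ∑ j, |(a j : ℝ)|
  have hA : 1 ≤ A := le_add_of_nonneg_right (by positivity)
  have hδ : 0 < 1 / A ^ 2 := by positivity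
  have hmem : ∀ x, partitionObjective a x < 1 / A ^ 2 →
      signVec x ∈ {x | partitionObjective a x = 0} := fun x hx =>
    partitionObjective_signVec_eq_zero a x (by rwa [lt_div_iff₀' (by positivity)] at hx)
  obtain ⟨_, ⟨y, rfl⟩, -, hy⟩ := hinf.exists_between hδ
  have hyS := hmem y hy
  refine ⟨⟨_, hyS⟩, exists_mul_le_rpow_add _ _ (partitionObjective_nonneg a)
    (fun _ => infDist_nonneg) hδ (div_le_one_of_le₀ (one_le_pow₀ hA) (by positivity))
    (by positivity : (0 : ℝ) ≤ 2 * √n + 1) ?_ (fun x hx => ?_) (fun x => ?_)⟩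
  · rw [div_le_div_iff_of_pos_left one_pos (by positivity) two_pos]
    linarith [one_le_pow₀ (M₀ := ℝ) (by norm_num : (1 : ℝ) ≤ 45) (n := n)]
  · exact (infDist_le_dist_of_mem (hmem x hx)).trans (dist_signVec_le a x)
  · exact (infDist_le_dist_of_mem hyS).trans (dist_le_of_partitionObjective_eq_zero a x hyS)

end
end
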